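/- In an optimal planar secondary structure OPT of S_E, if region S_j is open (some UU, AA, or UA-substring of S_j is paired with a 2-substring outside S_j), then it is impossible that both some fragment of V_j and some fragment of W_j are paired with their conjugate fragments: otherwise three stacking pairs forming an interleaving block would exist, contradicting planarity. -/
import Mathlib

inductive Base : Type
  | A | U | G | C
deriving DecidableEq, Repr

open Base

def isWC : Base → Base → Prop := fun x y =>
  (x = A ∧ y = U) ∨ (x = U ∧ y = A) ∨ (x = C ∧ y = G) ∨ (x = G ∧ y = C)

instance (x y : Base) : Decidable (isWC x y) := by unfold isWC; infer_instance

def at' (S : List Base) (i : ℕ) : Base := S.getD i Base.A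

def ValidSS (S : List Base) (P : Finset (ℕ × ℕ)) : Prop :=
  (∀ p ∈ P, p.1 + 2 ≤ p.2 ∧ p.2 < S.length ∧ isWC (at' S p.1) (at' S p.2)) ∧
  (∀ p ∈ P, ∀ q ∈ P, p ≠ q → p.1 ≠ q.1 ∧ p.1 ≠ q.2 ∧ p.2 ≠ q.1 ∧ p.2 ≠ q.2)

/-- A stacking pair `(x, x+1; y-1, y)` of `P`. -/
def StackAt (P : Finset (ℕ × ℕ)) (x y : ℕ) : Prop :=
  (x, y) ∈ P ∧ (x + 1, y - 1) ∈ P ∧ x + 4 ≤ y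

def rnaGraph (S : List Base) (P : Finset (ℕ × ℕ)) : SimpleGraph ℕ :=
  SimpleGraph.fromRel (fun a b => (b = a + 1 ∧ b < S.length) ∨ (a, b) ∈ P)

def IsMinor {W V : Type} (H : SimpleGraph W) (G : SimpleGraph V) : Prop :=
  ∃ φ : V → Option W,
    (∀ w : W, ∃ v, φ v = some w) ∧
    (∀ w : W, (G.induce {v | φ v = some w}).Connected) ∧
    (∀ w₁ w₂ : W, H.Adj w₁ w₂ → ∃ v₁ v₂, φ v₁ = some w₁ ∧ φ v₂ = some w₂ ∧ G.Adj v₁ v₂)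

def NonPlanar {V : Type} (G : SimpleGraph V) : Prop :=
  IsMinor (completeBipartiteGraph (Fin 3) (Fin 3)) G ∨ IsMinor (⊤ : SimpleGraph (Fin 5)) G

def Planar {V : Type} (G : SimpleGraph V) : Prop := ¬ NonPlanar G

-- Auxiliary lemmas

lemma adjSucc (S : List Base) (P : Finset (ℕ × ℕ)) (v : ℕ) (h : v + 1 < S.length) :
    (rnaGraph S P).Adj v (v + 1) := by
  rw [rnaGraph, SimpleGraph.fromRel_adj]
  exact ⟨by omega, Or.inl (Or.inl ⟨rfl, h⟩)⟩

lemma adjMem (S : List Base) (P : Finset (ℕ × ℕ)) {x y : ℕ} (h : (x, y) ∈ P) (hne : x ≠ y) :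
    (rnaGraph S P).Adj x y := by
  rw [rnaGraph, SimpleGraph.fromRel_adj]
  exact ⟨hne, Or.inl (Or.inr h)⟩

lemma induceAdj {G : SimpleGraph ℕ} {s : Set ℕ} {u v : s} (h : G.Adj u.val v.val) :
    (G.induce s).Adj u v := h

lemma reachChain (G : SimpleGraph ℕ) (s : Set ℕ) (a : ℕ) (ha : a ∈ s)
    (h : ∀ x, a ≤ x → x + 1 ∈ s → x ∈ s ∧ G.Adj x (x + 1)) :
    ∀ x, a ≤ x → ∀ hx : x ∈ s, (G.induce s).Reachable ⟨a, ha⟩ ⟨x, hx⟩ := by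
  intro x
  induction x with
  | zero =>
    intro hax hx
    have : a = 0 := Nat.le_zero.mp hax
    subst this
    rfl
  | succ x ih =>
    intro hax hx
    rcases Nat.lt_or_ge a (x + 1) with hlt | hge
    · have hax' : a ≤ x := by omega
      obtain ⟨hxs, hadj⟩ := h x hax' hx
      exact (ih hax' hxs).trans (SimpleGraph.Adj.reachable (induceAdj hadj))
    · have : a = x + 1 := by omega
      subst this
      rfl

lemma connOfReach (G : SimpleGraph ℕ) (s : Set ℕ) (a : ℕ) (ha : a ∈ s)
    (h : ∀ x, ∀ hx : x ∈ s, (G.induce s).Reachable ⟨x, hx⟩ ⟨a, ha⟩) :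
    (G.induce s).Connected := by
  rw [SimpleGraph.connected_iff]
  refine ⟨fun u v => ?_, ⟨⟨a, ha⟩⟩⟩
  exact (h u.1 u.2).trans (h v.1 v.2).symm

lemma iccConn (G : SimpleGraph ℕ) (a b : ℕ) (hab : a ≤ b)
    (hadj : ∀ v, a ≤ v → v < b → G.Adj v (v + 1)) :
    (G.induce (Set.Icc a b)).Connected := by
  have haI : a ∈ Set.Icc a b := Set.mem_Icc.mpr ⟨le_refl a, hab⟩
  refine connOfReach G _ a haI (fun x hx => ?_)
  refine (reachChain G _ a haI (fun y hy hys => ?_) x (Set.mem_Icc.mp hx).1 hx).symm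
  have hyb := (Set.mem_Icc.mp hys).2
  exact ⟨Set.mem_Icc.mpr ⟨hy, by omega⟩, hadj y hy (by omega)⟩

lemma connAux (G : SimpleGraph ℕ) {s t : Set ℕ} (h : s = t) (hc : (G.induce t).Connected) :
    (G.induce s).Connected := h ▸ hc

lemma singletonConn (G : SimpleGraph ℕ) (x : ℕ) :
    (G.induce {v | v = x}).Connected := by
  refine connOfReach G _ x rfl (fun y hy => ?_)
  have : (⟨y, hy⟩ : {v | v = x}) = ⟨x, rfl⟩ := Subtype.ext hy
  rw [this]

lemma insertIccConn (G : SimpleGraph ℕ) (x a b : ℕ) (hx : x < a) (hab : a ≤ b)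
    (hadjx : G.Adj x a)
    (hadj : ∀ v, a ≤ v → v < b → G.Adj v (v + 1)) :
    (G.induce {v | v = x ∨ (a ≤ v ∧ v ≤ b)}).Connected := by
  have haS : a ∈ {v | v = x ∨ (a ≤ v ∧ v ≤ b)} := Or.inr ⟨le_refl a, hab⟩
  refine connOfReach G _ a haS (fun y hy => ?_)
  rcases hy with hyx | hyab
  · subst hyx
    exact SimpleGraph.Adj.reachable (induceAdj hadjx)
  · refine (reachChain G _ a haS (fun z hz hzs => ?_) y hyab.1 (Or.inr hyab)).symm
    have hzb : z + 1 ≤ b := by rcases hzs with h' | h' <;> omega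
    exact ⟨Or.inr ⟨hz, by omega⟩, hadj z hz (by omega)⟩

/-- The branch-set assignment for the `K_{3,3}` minor. -/
def phi (i k m p q r : ℕ) (v : ℕ) : Option (Fin 3 ⊕ Fin 3) :=
  if i + 1 ≤ v ∧ v ≤ k - 1 then some (Sum.inl 0)
  else if k + 1 ≤ v ∧ v ≤ m - 1 then some (Sum.inl 1)
  else if q + 1 ≤ v ∧ v ≤ r then some (Sum.inl 2)
  else if v = i ∨ (p + 1 ≤ v ∧ v ≤ q) then some (Sum.inr 0)
  else if v = k then some (Sum.inr 1)
  else if m ≤ v ∧ v ≤ p then some (Sum.inr 2)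
  else none

lemma key (S : List Base) (P : Finset (ℕ × ℕ))
    (i k m p q r : ℕ)
    (hA1 : (i, p + 1) ∈ P) (hA2 : (i + 1, p) ∈ P)
    (hB1 : (k, q + 1) ∈ P) (hB2 : (k + 1, q) ∈ P)
    (hC : (m + 1, r) ∈ P)
    (h1 : i + 1 < k) (h2 : k + 1 < m) (h3 : m + 1 < p) (h4 : p + 1 < q)
    (h5 : q + 1 ≤ r) (hlen : r < S.length) :
    NonPlanar (rnaGraph S P) := by
  left
  set G := rnaGraph S P with hG
  have hadjS : ∀ v, v + 1 ≤ r → G.Adj v (v + 1) := fun v hv =>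
    adjSucc S P v (by omega)
  -- set characterizations
  have e1 : {v | phi i k m p q r v = some (Sum.inl 0)} = Set.Icc (i + 1) (k - 1) := by
    ext v
    simp only [phi, Set.mem_setOf_eq, Set.mem_Icc]
    split_ifs <;>
      first
        | exact iff_of_true rfl (by omega)
        | exact iff_of_false (by decide) (by omega)
  have e2 : {v | phi i k m p q r v = some (Sum.inl 1)} = Set.Icc (k + 1) (m - 1) := by
    ext v
    simp only [phi, Set.mem_setOf_eq, Set.mem_Icc]
    split_ifs <;>
      first
        | exact iff_of_true rfl (by omega)
        | exact iff_of_false (by decide) (by omega)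
  have e3 : {v | phi i k m p q r v = some (Sum.inl 2)} = Set.Icc (q + 1) r := by
    ext v
    simp only [phi, Set.mem_setOf_eq, Set.mem_Icc]
    split_ifs <;>
      first
        | exact iff_of_true rfl (by omega)
        | exact iff_of_false (by decide) (by omega)
  have e4 : {v | phi i k m p q r v = some (Sum.inr 0)} =
      {v | v = i ∨ (p + 1 ≤ v ∧ v ≤ q)} := by
    ext v
    simp only [phi, Set.mem_setOf_eq]
    split_ifs <;>
      first
        | exact iff_of_true rfl (by omega)
        | exact iff_of_false (by decide) (by omega)
  have e5 : {v | phi i k m p q r v = some (Sum.inr 1)} = {v | v = k} := by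
    ext v
    simp only [phi, Set.mem_setOf_eq]
    split_ifs <;>
      first
        | exact iff_of_true rfl (by omega)
        | exact iff_of_false (by decide) (by omega)
  have e6 : {v | phi i k m p q r v = some (Sum.inr 2)} = Set.Icc m p := by
    ext v
    simp only [phi, Set.mem_setOf_eq, Set.mem_Icc]
    split_ifs <;>
      first
        | exact iff_of_true rfl (by omega)
        | exact iff_of_false (by decide) (by omega)
  have mem1 : ∀ v, i + 1 ≤ v → v ≤ k - 1 → phi i k m p q r v = some (Sum.inl 0) := by
    intro v hv1 hv2
    have : v ∈ Set.Icc (i + 1) (k - 1) := ⟨hv1, hv2⟩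
    rw [← e1] at this; exact this
  have mem2 : ∀ v, k + 1 ≤ v → v ≤ m - 1 → phi i k m p q r v = some (Sum.inl 1) := by
    intro v hv1 hv2
    have : v ∈ Set.Icc (k + 1) (m - 1) := ⟨hv1, hv2⟩
    rw [← e2] at this; exact this
  have mem3 : ∀ v, q + 1 ≤ v → v ≤ r → phi i k m p q r v = some (Sum.inl 2) := by
    intro v hv1 hv2
    have : v ∈ Set.Icc (q + 1) r := ⟨hv1, hv2⟩
    rw [← e3] at this; exact this
  have mem4 : ∀ v, v = i ∨ (p + 1 ≤ v ∧ v ≤ q) → phi i k m p q r v = some (Sum.inr 0) := by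
    intro v hv
    have : v ∈ {v | v = i ∨ (p + 1 ≤ v ∧ v ≤ q)} := hv
    rw [← e4] at this; exact this
  have mem5 : phi i k m p q r k = some (Sum.inr 1) := by
    have : k ∈ {v | v = k} := rfl
    rw [← e5] at this; exact this
  have mem6 : ∀ v, m ≤ v → v ≤ p → phi i k m p q r v = some (Sum.inr 2) := by
    intro v hv1 hv2
    have : v ∈ Set.Icc m p := ⟨hv1, hv2⟩
    rw [← e6] at this; exact this
  refine ⟨phi i k m p q r, ?_, ?_, ?_⟩
  · -- surjectivity onto branch sets
    rintro (w | w) <;> fin_cases w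
    · exact ⟨i + 1, mem1 _ (le_refl _) (by omega)⟩
    · exact ⟨k + 1, mem2 _ (le_refl _) (by omega)⟩
    · exact ⟨q + 1, mem3 _ (le_refl _) (by omega)⟩
    · exact ⟨i, mem4 _ (Or.inl rfl)⟩
    · exact ⟨k, mem5⟩
    · exact ⟨m, mem6 _ (le_refl _) (by omega)⟩
  · -- connectivity of branch sets
    rintro (w | w) <;> fin_cases w
    · exact connAux G e1
        (iccConn G (i + 1) (k - 1) (by omega) (fun v hv1 hv2 => hadjS v (by omega)))
    · exact connAux G e2
        (iccConn G (k + 1) (m - 1) (by omega) (fun v hv1 hv2 => hadjS v (by omega)))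
    · exact connAux G e3
        (iccConn G (q + 1) r (by omega) (fun v hv1 hv2 => hadjS v (by omega)))
    · exact connAux G e4
        (insertIccConn G i (p + 1) q (by omega) (by omega)
          (adjMem S P hA1 (by omega)) (fun v hv1 hv2 => hadjS v (by omega)))
    · exact connAux G e5 (singletonConn G k)
    · exact connAux G e6
        (iccConn G m p (by omega) (fun v hv1 hv2 => hadjS v (by omega)))
  · -- adjacency of branch sets
    have table : ∀ (x y : Fin 3), ∃ v₁ v₂, phi i k m p q r v₁ = some (Sum.inl x) ∧
        phi i k m p q r v₂ = some (Sum.inr y) ∧ G.Adj v₁ v₂ := by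
      intro x y
      fin_cases x <;> fin_cases y
      · exact ⟨i + 1, i, mem1 _ (le_refl _) (by omega), mem4 _ (Or.inl rfl),
          (hadjS i (by omega)).symm⟩
      · refine ⟨k - 1, k, mem1 _ (by omega) (le_refl _), mem5, ?_⟩
        have h := hadjS (k - 1) (by omega)
        rwa [show k - 1 + 1 = k from by omega] at h
      · exact ⟨i + 1, p, mem1 _ (le_refl _) (by omega), mem6 _ (by omega) (le_refl _),
          adjMem S P hA2 (by omega)⟩
      · exact ⟨k + 1, q, mem2 _ (le_refl _) (by omega), mem4 _ (Or.inr ⟨by omega, le_refl _⟩),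
          adjMem S P hB2 (by omega)⟩
      · exact ⟨k + 1, k, mem2 _ (le_refl _) (by omega), mem5, (hadjS k (by omega)).symm⟩
      · refine ⟨m - 1, m, mem2 _ (by omega) (le_refl _), mem6 _ (le_refl _) (by omega), ?_⟩
        have h := hadjS (m - 1) (by omega)
        rwa [show m - 1 + 1 = m from by omega] at h
      · exact ⟨q + 1, q, mem3 _ (le_refl _) (by omega),
          mem4 _ (Or.inr ⟨by omega, le_refl _⟩), (hadjS q (by omega)).symm⟩
      · exact ⟨q + 1, k, mem3 _ (le_refl _) (by omega), mem5,
          (adjMem S P hB1 (by omega)).symm⟩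
      · exact ⟨r, m + 1, mem3 _ (by omega) (le_refl _), mem6 _ (by omega) (by omega),
          (adjMem S P hC (by omega)).symm⟩
    rintro (w₁ | w₁) (w₂ | w₂) hadj
    · simp at hadj
    · obtain ⟨v₁, v₂, hv₁, hv₂, hv⟩ := table w₁ w₂
      exact ⟨v₁, v₂, hv₁, hv₂, hv⟩
    · obtain ⟨v₁, v₂, hv₁, hv₂, hv⟩ := table w₂ w₁
      exact ⟨v₂, v₁, hv₂, hv₁, hv.symm⟩
    · simp at hadj

/-- Lemma on delimiter fragments of open regions: the region `S_j` occupies `[a,b]`,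
with the `V_j` fragments inside `[a₁,a₂]`, the `W_j` fragments inside `[b₁,b₂]`,
`V̄_j` inside `[c₁,c₂]` and `W̄_j` inside `[d₁,d₂]`, in this order; the node encodings
(whose `UU`/`AA`/`UA`-substrings witness openness) lie strictly between `b₂` and `c₁`.
If the structure `P` is planar and the region is open (some stacking pair joins a
2-substring of the middle part of `S_j` to a 2-substring outside `[a,b]`), then it
cannot be that both a fragment of `V_j` is paired with its conjugate fragment (giving a
stacking pair from `[a₁,a₂]` to `[c₁,c₂]`) and a fragment of `W_j` is paired with its
conjugate fragment (giving a stacking pair from `[b₁,b₂]` to `[d₁,d₂]`): these three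
stacking pairs would form an interleaving block, contradicting planarity. -/
theorem open_region_delimiter_fragments
    (S : List Base) (P : Finset (ℕ × ℕ)) (hval : ValidSS S P)
    (hplanar : Planar (rnaGraph S P))
    (a b a₁ a₂ b₁ b₂ c₁ c₂ d₁ d₂ : ℕ)
    (hord : a ≤ a₁ ∧ a₁ ≤ a₂ ∧ a₂ < b₁ ∧ b₁ ≤ b₂ ∧ b₂ < c₁ ∧ c₁ ≤ c₂ ∧ c₂ < d₁ ∧
            d₁ ≤ d₂ ∧ d₂ ≤ b)
    (hopen : ∃ x y, StackAt P x y ∧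
      ((b₂ < x ∧ x + 1 < c₁ ∧ b < y) ∨ (x + 1 < a ∧ b₂ < y - 1 ∧ y < c₁))) :
    ¬ ((∃ x y, StackAt P x y ∧ a₁ ≤ x ∧ x + 1 ≤ a₂ ∧ c₁ ≤ y - 1 ∧ y ≤ c₂) ∧
       (∃ x y, StackAt P x y ∧ b₁ ≤ x ∧ x + 1 ≤ b₂ ∧ d₁ ≤ y - 1 ∧ y ≤ d₂)) := by
  rintro ⟨⟨x₁, y₁, ⟨hx₁y₁, hx₁y₁', hs₁⟩, hv₁, hv₂, hv₃, hv₄⟩,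
          ⟨x₂, y₂, ⟨hx₂y₂, hx₂y₂', hs₂⟩, hw₁, hw₂, hw₃, hw₄⟩⟩
  obtain ⟨x₀, y₀, ⟨hx₀y₀, hx₀y₀', hs₀⟩, hcase⟩ := hopen
  obtain ⟨ho1, ho2, ho3, ho4, ho5, ho6, ho7, ho8, ho9⟩ := hord
  have hy₀len : y₀ < S.length := (hval.1 _ hx₀y₀).2.1
  have hy₁len : y₁ < S.length := (hval.1 _ hx₁y₁).2.1
  have hy₂len : y₂ < S.length := (hval.1 _ hx₂y₂).2.1
  apply hplanar
  rcases hcase with ⟨hc1, hc2, hc3⟩ | ⟨hc1, hc2, hc3⟩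
  · -- middle stack goes to the right of the region: order x₁ < x₂ < x₀ < y₁ < y₂ < y₀
    refine key S P x₁ x₂ x₀ (y₁ - 1) (y₂ - 1) (y₀ - 1) ?_ ?_ ?_ ?_ ?_
      (by omega) (by omega) (by omega) (by omega) (by omega) (by omega)
    · rwa [show y₁ - 1 + 1 = y₁ from by omega]
    · exact hx₁y₁'
    · rwa [show y₂ - 1 + 1 = y₂ from by omega]
    · exact hx₂y₂'
    · exact hx₀y₀'
  · -- middle stack goes to the left of the region: order x₀ < x₁ < x₂ < y₀ < y₁ < y₂
    refine key S P x₀ x₁ x₂ (y₀ - 1) (y₁ - 1) (y₂ - 1) ?_ ?_ ?_ ?_ ?_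
      (by omega) (by omega) (by omega) (by omega) (by omega) (by omega)
    · rwa [show y₀ - 1 + 1 = y₀ from by omega]
    · exact hx₀y₀'
    · rwa [show y₁ - 1 + 1 = y₁ from by omega]
    · exact hx₁y₁'
    · exact hx₂y₂'
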